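/- Let M be a matroid flock on E, let α ∈ ℤ^E and let I ⊆ J ⊆ E. Then r_α(J) = r_α(I) + r_{α+e_I}(J \ I), where r_β denotes the rank function of the matroid M_β and e_I := Σ_{i∈I} e_i. -/

import Mathlib

open Matroid Set

namespace FrobFlock

variable {E : Type*}

/-- The local rank function of a matroid: the size of a largest independent subset of `X`. -/
noncomputable def rk (M : Matroid E) (X : Set E) : ℕ :=
  sSup {n | ∃ I, I ⊆ X ∧ M.Indep I ∧ I.ncard = n}

/-- Deletion of the set `D` from the matroid `M`. -/
def mdel (M : Matroid E) (D : Set E) : Matroid E := M ↾ (M.E \ D)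

/-- Contraction of the set `C` in the matroid `M` (defined by duality). -/
def mcon (M : Matroid E) (C : Set E) : Matroid E := (mdel M✶ C)✶

/-- The 0/1 indicator vector of a set `I ⊆ E`. -/
noncomputable def eVec (I : Set E) : E → ℤ := I.indicator 1

/-- `M : ℤ^E → Matroid E` is a matroid flock of rank `d` on `E`:
each `M α` is a matroid on ground set `E` of rank `d`, satisfying (MF1) and (MF2). -/
def IsMatroidFlock [Fintype E] (d : ℕ) (M : (E → ℤ) → Matroid E) : Prop :=
  (∀ α, (M α).E = Set.univ) ∧
  (∀ α, rk (M α) Set.univ = d) ∧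
  (∀ α (i : E), mcon (M α) {i} = mdel (M (α + eVec {i})) {i}) ∧
  (∀ α, M α = M (α + 1))

/-- A matroid valuation `ν : binom(E,d) → ℤ ∪ {∞}`, encoded as a function on all finsets
which takes the value `⊤` outside `binom(E,d)`. -/
def IsValuation [DecidableEq E] (d : ℕ) (ν : Finset E → WithTop ℤ) : Prop :=
  (∀ B : Finset E, B.card ≠ d → ν B = ⊤) ∧
  (∃ B : Finset E, B.card = d ∧ ν B ≠ ⊤) ∧
  (∀ B B' : Finset E, B.card = d → B'.card = d → ∀ i ∈ B \ B', ∃ j ∈ B' \ B,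
      ν (insert j (B.erase i)) + ν (insert i (B'.erase j)) ≤ ν B + ν B')

/-- `B ∈ B^ν_α`: the set `B` attains the supremum `g^ν(α)`, i.e. `B` is a basis of `M^ν_α`. -/
def OptBasis (d : ℕ) (ν : Finset E → WithTop ℤ) (α : E → ℤ) (B : Finset E) : Prop :=
  B.card = d ∧ ν B ≠ ⊤ ∧ ∀ B' : Finset E, B'.card = d →
    ((∑ i ∈ B', α i : ℤ) : WithTop ℤ) + ν B ≤ ((∑ i ∈ B, α i : ℤ) : WithTop ℤ) + ν B'

end FrobFlock

/-! Iterating (MF1) one element at a time shows that contracting any set `I` in `M_α` gives the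
same minor as deleting `I` from `M_{α+e_I}`. The claim is then the rank identity
`r(J) = r(I) + r_{M／I}(J \ I)`, valid in every matroid. -/

namespace Matroid

variable {α : Type*} {C D X : Set α}

lemma eRk_eq_eRk_add_eRk_contract (M : Matroid α) (hCX : C ⊆ X) :
    M.eRk X = M.eRk C + (M ／ C).eRk (X \ C) := by
  obtain ⟨J, hJ⟩ := M.exists_isBasis' C
  obtain ⟨I, hI, hJI⟩ := hJ.indep.subset_isBasis'_of_subset (hJ.subset.trans hCX)
  have hIC : I ∩ C = J := subset_antisymm
    (fun e ⟨heI, heC⟩ ↦ hJ.mem_of_insert_indep heC (hI.indep.subset (insert_subset heI hJI)))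
    (subset_inter hJI hJ.subset)
  have hIJ : I \ C ∪ J = I := by rw [← hIC, sdiff_union_inter]
  have hcon : (M ／ C).IsBasis' (I \ C) (X \ C) :=
    hI.contract_isBasis' hJ (by rw [hIJ]; exact hI.indep)
  rw [hI.eRk_eq_encard, hJ.eRk_eq_encard, hcon.eRk_eq_encard, ← hIC, add_comm,
    encard_sdiff_add_encard_inter]

lemma eRk_delete_of_disjoint (M : Matroid α) (hXD : Disjoint X D) : (M ＼ D).eRk X = M.eRk X := by
  rw [delete_eq_restrict, restrict_eRk_eq', ← inter_sdiff_assoc,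
    (hXD.mono_left inter_subset_left).sdiff_eq_left, eRk_inter_ground]

end Matroid

namespace FrobFlock

variable {E : Type*}

lemma rk_eq_eRk (M : Matroid E) [M.RankFinite] (X : Set E) : (rk M X : ℕ∞) = M.eRk X := by
  obtain ⟨I, hI⟩ := M.exists_isBasis' X
  have hIfin : I.Finite := hI.indep.finite
  have hgreatest : IsGreatest {n | ∃ J, J ⊆ X ∧ M.Indep J ∧ J.ncard = n} I.ncard := by
    refine ⟨⟨I, hI.subset, hI.indep, rfl⟩, ?_⟩
    rintro _ ⟨J, hJX, hJ, rfl⟩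
    have := (hJ.encard_le_eRk_of_subset hJX).trans_eq hI.eRk_eq_encard
    rwa [← hJ.finite.cast_ncard_eq, ← hIfin.cast_ncard_eq, Nat.cast_le] at this
  rw [rk, hgreatest.csSup_eq, hIfin.cast_ncard_eq, hI.eRk_eq_encard]

lemma eVec_insert {i : E} {I : Set E} (hi : i ∉ I) : eVec (insert i I) = eVec {i} + eVec I := by
  rw [eVec, insert_eq, indicator_union_of_disjoint (disjoint_singleton_left.mpr hi)]
  rfl

lemma contract_eq_delete_add_eVec {M : (E → ℤ) → Matroid E}
    (hM : ∀ α i, M α ／ {i} = M (α + eVec {i}) ＼ {i}) {I : Set E} (hI : I.Finite)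
    (α : E → ℤ) :
    M α ／ I = M (α + eVec I) ＼ I := by
  induction I, hI using Set.Finite.induction_on generalizing α with
  | empty => rw [eVec, indicator_empty', add_zero, contract_empty, delete_empty]
  | @insert a s has _ ih =>
    rw [insert_eq, ← contract_contract, hM,
      ← contract_delete_comm _ (disjoint_singleton_right.mpr has), ih, delete_delete,
      ← insert_eq, eVec_insert has, add_assoc, union_singleton]

/-- **Lemma.** Let `M` be a matroid flock on `E`, let `α ∈ ℤ^E` and let `I ⊆ J ⊆ E`.
Then `r_α(J) = r_α(I) + r_{α+e_I}(J \ I)`, where `r_β` is the rank function of `M_β`. -/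
theorem flock_rank_triangle [Fintype E] (d : ℕ) (M : (E → ℤ) → Matroid E)
    (hM : IsMatroidFlock d M) (α : E → ℤ) (I J : Set E) (hIJ : I ⊆ J) :
    rk (M α) J = rk (M α) I + rk (M (α + eVec I)) (J \ I) := by
  apply Nat.cast_injective (R := ℕ∞)
  -- `mcon` and `mdel` are definitionally Mathlib's `／` and `＼`, so (MF1) is `hM.2.2.1` as is.
  rw [Nat.cast_add, rk_eq_eRk, rk_eq_eRk, rk_eq_eRk, eRk_eq_eRk_add_eRk_contract _ hIJ,
    contract_eq_delete_add_eVec hM.2.2.1 I.toFinite, eRk_delete_of_disjoint _ disjoint_sdiff_left]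

end FrobFlock
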